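/- arXiv:2405.15547 — 3 statements merged into one kernel-verified Lean document; each statement's English description precedes it below -/
import Mathlib

section
/- If A and B are n×n real matrices such that the sum of singular values of A+B equals the sum of singular values of A plus the sum of singular values of B, then there exists a real orthogonal matrix P such that PA and PB are both positive semi-definite. -/
/-!
Let `|M| = (Mᵀ M)^{1/2}`: its trace is the sum of the singular values of `M`, and `W M = |M|` for
some orthogonal `W` (polar decomposition). If `S = Rᵀ R` is positive semi-definite and `V` is
orthogonal, then `2 (tr S - tr (V S)) = ‖R - R Vᵀ‖²` (Frobenius norm), so `tr (V S) ≤ tr S`, with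
equality only when `V S = S`. Applied to `S = |M|`, this gives `tr (W M) ≤ tr |M|` for every
orthogonal `W`, with equality only when `W M = |M|`. Choosing `W` with `W (A + B) = |A + B|`, the
hypothesis reads `tr (W A) + tr (W B) = tr |A| + tr |B|`, so both inequalities are equalities and
`P = W` works.
-/

open Matrix

/-- The sum of the singular values of a square real matrix:
singular values are the square roots of the eigenvalues of `Aᵀ * A`. -/
noncomputable def sumSingularValues {n : ℕ} (A : Matrix (Fin n) (Fin n) ℝ) : ℝ :=
  ∑ i, Real.sqrt ((Matrix.isHermitian_conjTranspose_mul_self A).eigenvalues i)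

open Module
open scoped MatrixOrder InnerProductSpace

theorem exists_orthonormalBasis_norm_smul_eq {𝕜 E ι : Type*} [RCLike 𝕜] [NormedAddCommGroup E]
    [InnerProductSpace 𝕜 E] [FiniteDimensional 𝕜 E] [Fintype ι]
    (hcard : finrank 𝕜 E = Fintype.card ι) {w : ι → E}
    (hw : Pairwise fun i j => ⟪w i, w j⟫_𝕜 = 0) :
    ∃ b : OrthonormalBasis ι 𝕜 E, ∀ i, (‖w i‖ : 𝕜) • b i = w i := by
  set v : ι → E := fun i => (‖w i‖⁻¹ : 𝕜) • w i
  have hv : Orthonormal 𝕜 ({i | w i ≠ 0}.domRestrict v) := by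
    refine ⟨fun i => norm_smul_inv_norm i.2, fun i j hij => ?_⟩
    simp [v, inner_smul_left, inner_smul_right, hw (Subtype.coe_ne_coe.mpr hij)]
  obtain ⟨b, hb⟩ := hv.exists_orthonormalBasis_extension_of_card_eq hcard
  refine ⟨b, fun i => ?_⟩
  by_cases hi : w i = 0
  · simp [hi]
  · rw [hb i hi, smul_smul, mul_inv_cancel₀ (by simpa using hi), one_smul]

namespace Matrix

variable {m : Type*} [Fintype m] [DecidableEq m]

theorem trace_transpose_mul_self_sub_mul_transpose {R V : Matrix m m ℝ}
    (hV : V ∈ orthogonalGroup m ℝ) :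
    trace ((R - R * Vᵀ)ᵀ * (R - R * Vᵀ)) = 2 * (trace (Rᵀ * R) - trace (V * (Rᵀ * R))) := by
  have h_transpose : trace (Rᵀ * R * Vᵀ) = trace (V * (Rᵀ * R)) := by
    rw [← trace_transpose]
    simp [Matrix.mul_assoc]
  have h_conj : trace (V * (Rᵀ * R) * Vᵀ) = trace (Rᵀ * R) := by
    rw [trace_mul_comm, ← Matrix.mul_assoc, (mem_orthogonalGroup_iff' m ℝ).mp hV, Matrix.one_mul]
  simp only [transpose_sub, transpose_mul, transpose_transpose, sub_mul, mul_sub, trace_sub]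
  simp only [← Matrix.mul_assoc] at h_transpose h_conj ⊢
  rw [h_transpose, h_conj]
  ring

theorem PosSemidef.exists_eq_transpose_mul_self {S : Matrix m m ℝ} (hS : S.PosSemidef) :
    ∃ R : Matrix m m ℝ, S = Rᵀ * R := by
  obtain ⟨R, rfl⟩ := CStarAlgebra.nonneg_iff_eq_star_mul_self.mp hS.nonneg
  exact ⟨R, by rw [star_eq_conjTranspose, conjTranspose_eq_transpose_of_trivial]⟩

theorem PosSemidef.trace_orthogonal_mul_le {S V : Matrix m m ℝ} (hS : S.PosSemidef)
    (hV : V ∈ orthogonalGroup m ℝ) : trace (V * S) ≤ trace S := by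
  obtain ⟨R, rfl⟩ := hS.exists_eq_transpose_mul_self
  have := (posSemidef_conjTranspose_mul_self (R - R * Vᵀ)).trace_nonneg
  rw [conjTranspose_eq_transpose_of_trivial, trace_transpose_mul_self_sub_mul_transpose hV] at this
  linarith

theorem PosSemidef.orthogonal_mul_eq_self_of_trace_eq {S V : Matrix m m ℝ} (hS : S.PosSemidef)
    (hV : V ∈ orthogonalGroup m ℝ) (h : trace (V * S) = trace S) : V * S = S := by
  obtain ⟨R, rfl⟩ := hS.exists_eq_transpose_mul_self
  have hR : R = R * Vᵀ := by
    rw [← sub_eq_zero, ← trace_conjTranspose_mul_self_eq_zero_iff,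
      conjTranspose_eq_transpose_of_trivial, trace_transpose_mul_self_sub_mul_transpose hV, h,
      sub_self, mul_zero]
  calc V * (Rᵀ * R) = (Rᵀ * (R * Vᵀ))ᵀ := by simp [Matrix.mul_assoc]
    _ = Rᵀ * R := by rw [← hR, transpose_mul, transpose_transpose]

noncomputable def modulus (M : Matrix m m ℝ) : Matrix m m ℝ := cfc Real.sqrt (Mᴴ * M)

noncomputable def singularValues (M : Matrix m m ℝ) (i : m) : ℝ :=
  √((isHermitian_conjTranspose_mul_self M).eigenvalues i)

variable (M : Matrix m m ℝ)

theorem modulus_eq_mul_diagonal_singularValues :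
    modulus M = ((isHermitian_conjTranspose_mul_self M).eigenvectorUnitary : Matrix m m ℝ) *
      diagonal (singularValues M) *
      ((isHermitian_conjTranspose_mul_self M).eigenvectorUnitary : Matrix m m ℝ)ᵀ := by
  rw [modulus, (isHermitian_conjTranspose_mul_self M).cfc_eq, IsHermitian.cfc,
    Unitary.conjStarAlgAut_apply, RCLike.ofReal_real_eq_id]
  rfl

theorem posSemidef_modulus : (modulus M).PosSemidef :=
  (cfc_nonneg fun x _ => Real.sqrt_nonneg x).posSemidef

theorem trace_modulus : trace (modulus M) = ∑ i, singularValues M i := by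
  rw [modulus_eq_mul_diagonal_singularValues, trace_mul_cycle,
    (mem_orthogonalGroup_iff' m ℝ).mp (isHermitian_conjTranspose_mul_self M).eigenvectorUnitary.2,
    Matrix.one_mul, trace_diagonal]

theorem inner_mulVec_eigenvectorBasis (i j : m) :
    ⟪WithLp.toLp 2 (M *ᵥ (isHermitian_conjTranspose_mul_self M).eigenvectorBasis i),
      WithLp.toLp 2 (M *ᵥ (isHermitian_conjTranspose_mul_self M).eigenvectorBasis j)⟫_ℝ =
      if i = j then (isHermitian_conjTranspose_mul_self M).eigenvalues i else 0 := by
  set hH := isHermitian_conjTranspose_mul_self M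
  have h_orthonormal := orthonormal_iff_ite.mp hH.eigenvectorBasis.orthonormal i j
  rw [EuclideanSpace.inner_eq_star_dotProduct, star_trivial] at h_orthonormal
  rw [EuclideanSpace.inner_toLp_toLp, star_trivial, dotProduct_mulVec, ← mulVec_transpose,
    mulVec_mulVec, ← conjTranspose_eq_transpose_of_trivial, hH.mulVec_eigenvectorBasis,
    smul_dotProduct, h_orthonormal, smul_eq_mul, mul_ite, mul_one, mul_zero]
  split_ifs with h
  · rw [h]
  · rfl

theorem exists_orthonormalBasis_mulVec_eigenvectorBasis :
    ∃ f : OrthonormalBasis m ℝ (EuclideanSpace ℝ m), ∀ j,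
      M *ᵥ (isHermitian_conjTranspose_mul_self M).eigenvectorBasis j =
        singularValues M j • ⇑(f j) := by
  obtain ⟨f, hf⟩ := exists_orthonormalBasis_norm_smul_eq finrank_euclideanSpace
    (w := fun j => WithLp.toLp 2 (M *ᵥ (isHermitian_conjTranspose_mul_self M).eigenvectorBasis j))
    (fun i j hij => (inner_mulVec_eigenvectorBasis M i j).trans (if_neg hij))
  refine ⟨f, fun j => ?_⟩
  have hnorm : ‖WithLp.toLp 2 (M *ᵥ (isHermitian_conjTranspose_mul_self M).eigenvectorBasis j)‖ =
      singularValues M j := by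
    rw [norm_eq_sqrt_real_inner, inner_mulVec_eigenvectorBasis, if_pos rfl, singularValues]
  have := congrArg WithLp.ofLp (hf j)
  rw [hnorm] at this
  simpa using this.symm

theorem exists_orthogonal_mul_eq_modulus : ∃ W ∈ orthogonalGroup m ℝ, W * M = modulus M := by
  obtain ⟨f, hf⟩ := exists_orthonormalBasis_mulVec_eigenvectorBasis M
  set E : Matrix m m ℝ := ↑(isHermitian_conjTranspose_mul_self M).eigenvectorUnitary
  set F : Matrix m m ℝ := (EuclideanSpace.basisFun m ℝ).toBasis.toMatrix f.toBasis
  have hE : E ∈ orthogonalGroup m ℝ := (isHermitian_conjTranspose_mul_self M).eigenvectorUnitary.2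
  have hF : F ∈ orthogonalGroup m ℝ :=
    (EuclideanSpace.basisFun m ℝ).toMatrix_orthonormalBasis_mem_unitary f
  have hME : M * E = F * diagonal (singularValues M) := by
    ext i j
    rw [mul_diagonal, mul_apply]
    simpa [E, F, Basis.toMatrix_apply, mulVec, dotProduct, IsHermitian.eigenvectorUnitary_apply,
      mul_comm] using congrFun (hf j) i
  refine ⟨E * Fᵀ, mul_mem hE (Unitary.star_mem hF), ?_⟩
  calc E * Fᵀ * M = E * Fᵀ * (M * E) * Eᵀ := by
        rw [Matrix.mul_assoc _ (M * E), Matrix.mul_assoc M, (mem_orthogonalGroup_iff m ℝ).mp hE,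
          Matrix.mul_one]
    _ = E * (Fᵀ * F) * diagonal (singularValues M) * Eᵀ := by
        rw [hME]
        simp only [Matrix.mul_assoc]
    _ = modulus M := by
        rw [(mem_orthogonalGroup_iff' m ℝ).mp hF, Matrix.mul_one,
          modulus_eq_mul_diagonal_singularValues]

theorem exists_orthogonal_mul_modulus_eq {W : Matrix m m ℝ} (hW : W ∈ orthogonalGroup m ℝ) :
    ∃ V ∈ orthogonalGroup m ℝ, V * modulus M = W * M := by
  obtain ⟨W₀, hW₀, h₀⟩ := exists_orthogonal_mul_eq_modulus M
  refine ⟨W * W₀ᵀ, mul_mem hW (Unitary.star_mem hW₀), ?_⟩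
  rw [← h₀, Matrix.mul_assoc, ← Matrix.mul_assoc W₀ᵀ, (mem_orthogonalGroup_iff' m ℝ).mp hW₀,
    Matrix.one_mul]

theorem trace_orthogonal_mul_le_trace_modulus {W : Matrix m m ℝ}
    (hW : W ∈ orthogonalGroup m ℝ) : trace (W * M) ≤ trace (modulus M) := by
  obtain ⟨V, hV, hVW⟩ := exists_orthogonal_mul_modulus_eq M hW
  exact hVW ▸ (posSemidef_modulus M).trace_orthogonal_mul_le hV

theorem orthogonal_mul_eq_modulus_of_trace_eq {W : Matrix m m ℝ}
    (hW : W ∈ orthogonalGroup m ℝ) (h : trace (W * M) = trace (modulus M)) :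
    W * M = modulus M := by
  obtain ⟨V, hV, hVW⟩ := exists_orthogonal_mul_modulus_eq M hW
  rw [← hVW] at h ⊢
  exact (posSemidef_modulus M).orthogonal_mul_eq_self_of_trace_eq hV h

end Matrix

theorem sumSingularValues_eq_trace_modulus {n : ℕ} (M : Matrix (Fin n) (Fin n) ℝ) :
    sumSingularValues M = trace (modulus M) :=
  (trace_modulus M).symm

/-- Equality case in the subadditivity of the sum of singular values for real
matrices: there is a real orthogonal `P` with `P * A` and `P * B` both
positive semi-definite. -/
theorem eq_sumSingularValues_exists_orthogonal {n : ℕ} (A B : Matrix (Fin n) (Fin n) ℝ)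
    (h : sumSingularValues (A + B) = sumSingularValues A + sumSingularValues B) :
    ∃ P : Matrix (Fin n) (Fin n) ℝ,
      Pᵀ * P = 1 ∧ (P * A).PosSemidef ∧ (P * B).PosSemidef := by
  obtain ⟨W, hW, hW_sum⟩ := exists_orthogonal_mul_eq_modulus (A + B)
  have hA := trace_orthogonal_mul_le_trace_modulus A hW
  have hB := trace_orthogonal_mul_le_trace_modulus B hW
  have h_trace : trace (W * A) + trace (W * B) = trace (modulus A) + trace (modulus B) := by
    rw [← trace_add, ← Matrix.mul_add, hW_sum, ← sumSingularValues_eq_trace_modulus, h,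
      sumSingularValues_eq_trace_modulus, sumSingularValues_eq_trace_modulus]
  refine ⟨W, (mem_orthogonalGroup_iff' _ ℝ).mp hW, ?_, ?_⟩
  · rw [orthogonal_mul_eq_modulus_of_trace_eq A hW (by linarith)]
    exact posSemidef_modulus A
  · rw [orthogonal_mul_eq_modulus_of_trace_eq B hW (by linarith)]
    exact posSemidef_modulus B
end

section
/- Let G be a simple graph on n vertices and ∅ ≠ S ⊊ V(G) with |S| = α. Then 2·E(G) ≤ E(G_S) + E(G_{V∖S}), where E(G) is the sum of absolute values of the eigenvalues of A(G), and E(G_S) is the sum of |λ − α/n| over the eigenvalues λ of A(G_S) = A(G) + D_S. -/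
/-!
For a symmetric real matrix `H`, `∑ |λᵢ(H) - c|` is the maximum of `tr (P (H - c·1))` over all
`P = W diag(s) Wᵀ` with `W` orthogonal and `|sᵢ| ≤ 1`, attained at `P = sign (H - c·1)`.
Since `D_S + D_{V∖S} = 1` and `α/n + (n-α)/n = 1`, the matrices `A(G_S) - α/n` and
`A(G_{V∖S}) - (n-α)/n` add up to `2 A(G)`; evaluating both sides against `sign (A(G))` gives the
inequality.
-/

set_option linter.unusedSectionVars false

open Matrix Finset

/-- Diagonal 0/1 indicator matrix of the loop set `S`. -/
def loopDiag {V : Type} [Fintype V] [DecidableEq V] (S : Finset V) : Matrix V V ℝ :=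
  Matrix.diagonal (fun v => if v ∈ S then (1 : ℝ) else 0)

lemma adjMatrix_isHermitian {V : Type} [Fintype V] [DecidableEq V]
    (G : SimpleGraph V) [DecidableRel G.Adj] :
    (SimpleGraph.adjMatrix ℝ G).IsHermitian := by
  rw [Matrix.IsHermitian, conjTranspose_eq_transpose_of_trivial]
  exact G.isSymm_adjMatrix

lemma selfLoop_isHermitian {V : Type} [Fintype V] [DecidableEq V]
    (G : SimpleGraph V) [DecidableRel G.Adj] (S : Finset V) :
    (SimpleGraph.adjMatrix ℝ G + loopDiag S).IsHermitian :=
  (adjMatrix_isHermitian G).add (Matrix.isHermitian_diagonal _)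

/-- `∑ i, |λᵢ(M) - c|`, the eigenvalue sum of absolute deviations from `c`. -/
noncomputable def energyOf {V : Type} [Fintype V] [DecidableEq V]
    (M : Matrix V V ℝ) (hM : M.IsHermitian) (c : ℝ) : ℝ :=
  ∑ i, |hM.eigenvalues i - c|

/-- The energy of a simple graph: sum of absolute values of adjacency eigenvalues. -/
noncomputable def graphEnergy {V : Type} [Fintype V] [DecidableEq V]
    (G : SimpleGraph V) [DecidableRel G.Adj] : ℝ :=
  energyOf _ (adjMatrix_isHermitian G) 0

/-- The energy of the self-loop graph `G_S`: `∑ i, |λᵢ(A(G)+D_S) - |S|/n|`. -/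
noncomputable def selfLoopEnergy {V : Type} [Fintype V] [DecidableEq V]
    (G : SimpleGraph V) [DecidableRel G.Adj] (S : Finset V) : ℝ :=
  energyOf _ (selfLoop_isHermitian G S) ((S.card : ℝ) / (Fintype.card V))

namespace Matrix

variable {V : Type} [Fintype V] [DecidableEq V]

lemma trace_mul_conj_diagonal {R : Type*} [CommSemiring R] (P U U' : Matrix V V R) (d : V → R) :
    trace (P * (U * diagonal d * U')) = ∑ i, d i * (U' * P * U) i i := by
  rw [← Matrix.mul_assoc, trace_mul_comm, ← Matrix.mul_assoc, ← Matrix.mul_assoc, trace]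
  exact Finset.sum_congr rfl fun i _ => by simp [mul_diagonal, mul_comm]

lemma abs_conj_diagonal_apply_self_le_one {W : Matrix V V ℝ} (hW : W ∈ unitaryGroup V ℝ)
    {s : V → ℝ} (hs : ∀ j, |s j| ≤ 1) (i : V) : |(W * diagonal s * star W) i i| ≤ 1 :=
  calc |(W * diagonal s * star W) i i| = |∑ j, s j * W i j ^ 2| := by
        rw [mul_apply]
        simp only [mul_diagonal, star_apply, star_trivial]
        exact congrArg _ (Finset.sum_congr rfl fun j _ => by ring)
    _ ≤ ∑ j, |s j| * W i j ^ 2 := by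
        refine (Finset.abs_sum_le_sum_abs _ _).trans_eq (Finset.sum_congr rfl fun j _ => ?_)
        rw [abs_mul, abs_pow, sq_abs]
    _ ≤ ∑ j, W i j ^ 2 :=
        Finset.sum_le_sum fun j _ => mul_le_of_le_one_left (sq_nonneg _) (hs j)
    _ = (W * star W) i i := by simp [mul_apply, sq]
    _ = 1 := by simp [mem_unitaryGroup_iff.mp hW]

namespace IsHermitian

variable {H : Matrix V V ℝ} (hH : H.IsHermitian)

lemma sub_smul_one_eq_conj (c : ℝ) :
    H - c • 1 = (hH.eigenvectorUnitary : Matrix V V ℝ) *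
      diagonal (fun i => hH.eigenvalues i - c) * star (hH.eigenvectorUnitary : Matrix V V ℝ) := by
  set U := (hH.eigenvectorUnitary : Matrix V V ℝ)
  have hU : U * star U = 1 := mem_unitaryGroup_iff.mp hH.eigenvectorUnitary.2
  have hspec : H = U * diagonal hH.eigenvalues * star U := by
    simpa [Function.comp_def] using hH.spectral_theorem
  rw [← diagonal_sub hH.eigenvalues, ← smul_one_eq_diagonal, Matrix.mul_sub, Matrix.sub_mul,
    ← hspec, Matrix.mul_smul, Matrix.mul_one, Matrix.smul_mul, hU]

lemma trace_conj_diagonal_mul_le_energyOf {W : Matrix V V ℝ} (hW : W ∈ unitaryGroup V ℝ)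
    {s : V → ℝ} (hs : ∀ j, |s j| ≤ 1) (c : ℝ) :
    trace (W * diagonal s * star W * (H - c • 1)) ≤ energyOf H hH c := by
  set U := (hH.eigenvectorUnitary : Matrix V V ℝ)
  have hconj : star U * (W * diagonal s * star W) * U
      = star U * W * diagonal s * star (star U * W) := by
    simp only [star_mul, star_star, Matrix.mul_assoc]
  have hUW : star U * W ∈ unitaryGroup V ℝ := mul_mem (Unitary.star_mem hH.eigenvectorUnitary.2) hW
  rw [hH.sub_smul_one_eq_conj, trace_mul_conj_diagonal, hconj, energyOf]
  refine Finset.sum_le_sum fun i _ => ?_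
  calc (hH.eigenvalues i - c) * (star U * W * diagonal s * star (star U * W)) i i
      ≤ |hH.eigenvalues i - c| * |(star U * W * diagonal s * star (star U * W)) i i| := by
        rw [← abs_mul]; exact le_abs_self _
    _ ≤ |hH.eigenvalues i - c| :=
        mul_le_of_le_one_right (abs_nonneg _) (abs_conj_diagonal_apply_self_le_one hUW hs i)

noncomputable def signMatrix (c : ℝ) : Matrix V V ℝ :=
  (hH.eigenvectorUnitary : Matrix V V ℝ) *
    diagonal (fun i => (SignType.sign (hH.eigenvalues i - c) : ℝ)) *
    star (hH.eigenvectorUnitary : Matrix V V ℝ)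

lemma trace_signMatrix_mul_eq_energyOf (c : ℝ) :
    trace (hH.signMatrix c * (H - c • 1)) = energyOf H hH c := by
  have hU : star (hH.eigenvectorUnitary : Matrix V V ℝ) * hH.eigenvectorUnitary = 1 :=
    mem_unitaryGroup_iff'.mp hH.eigenvectorUnitary.2
  rw [hH.sub_smul_one_eq_conj, trace_mul_conj_diagonal, signMatrix, energyOf]
  simp only [Matrix.mul_assoc, hU, Matrix.mul_one]
  simp only [← Matrix.mul_assoc, hU, Matrix.one_mul, diagonal_apply_eq, self_mul_sign]

end IsHermitian

end Matrix

lemma abs_sign_le_one {α : Type*} [Ring α] [LinearOrder α] [IsStrictOrderedRing α] (x : α) :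
    |(SignType.sign x : α)| ≤ 1 := by
  rcases lt_trichotomy x 0 with h | h | h <;> simp [h]

theorem mul_energyOf_le_add {V : Type} [Fintype V] [DecidableEq V] {H H₁ H₂ : Matrix V V ℝ} (hH : H.IsHermitian)
    (hH₁ : H₁.IsHermitian) (hH₂ : H₂.IsHermitian) {t c c₁ c₂ : ℝ}
    (h : t • (H - c • 1) = (H₁ - c₁ • 1) + (H₂ - c₂ • 1)) :
    t * energyOf H hH c ≤ energyOf H₁ hH₁ c₁ + energyOf H₂ hH₂ c₂ := by
  have hU := hH.eigenvectorUnitary.2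
  have hs (i : V) := abs_sign_le_one (hH.eigenvalues i - c)
  calc t * energyOf H hH c = trace (hH.signMatrix c * (t • (H - c • 1))) := by
        rw [Matrix.mul_smul, trace_smul, hH.trace_signMatrix_mul_eq_energyOf, smul_eq_mul]
    _ = trace (hH.signMatrix c * (H₁ - c₁ • 1)) + trace (hH.signMatrix c * (H₂ - c₂ • 1)) := by
        rw [h, Matrix.mul_add, trace_add]
    _ ≤ energyOf H₁ hH₁ c₁ + energyOf H₂ hH₂ c₂ :=
        add_le_add (hH₁.trace_conj_diagonal_mul_le_energyOf hU hs c₁)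
          (hH₂.trace_conj_diagonal_mul_le_energyOf hU hs c₂)

lemma loopDiag_add_loopDiag_compl {V : Type} [Fintype V] [DecidableEq V] (S : Finset V) :
    loopDiag S + loopDiag Sᶜ = 1 := by
  rw [loopDiag, loopDiag, diagonal_add, ← diagonal_one]
  congr 1
  ext v
  by_cases hv : v ∈ S <;> simp [hv]

theorem two_energy_le_general {V : Type} [Fintype V] [DecidableEq V]
    (G : SimpleGraph V) [DecidableRel G.Adj] (S : Finset V) :
    2 * graphEnergy G ≤ selfLoopEnergy G S + selfLoopEnergy G Sᶜ := by
  rcases isEmpty_or_nonempty V with _ | _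
  · simp [graphEnergy, selfLoopEnergy, energyOf]
  have hc : (S.card : ℝ) / Fintype.card V + (Sᶜ.card : ℝ) / Fintype.card V = 1 := by
    rw [← add_div, div_eq_one_iff_eq (by positivity)]
    exact_mod_cast S.card_add_card_compl
  refine mul_energyOf_le_add _ _ _ ?_
  set A := SimpleGraph.adjMatrix ℝ G
  calc (2 : ℝ) • (A - (0 : ℝ) • 1) = A + loopDiag S + (A + loopDiag Sᶜ)
        - ((S.card : ℝ) / Fintype.card V + (Sᶜ.card : ℝ) / Fintype.card V) • 1 := by
        rw [hc, add_add_add_comm, add_assoc, loopDiag_add_loopDiag_compl]; module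
    _ = _ := by rw [add_smul]; abel

/-- `2·E(G) ≤ E(G_S) + E(G_{V∖S})`. -/
theorem two_energy_le {V : Type} [Fintype V] [DecidableEq V]
    (G : SimpleGraph V) [DecidableRel G.Adj] (S : Finset V)
    (hne : S.Nonempty) (hproper : S ≠ Finset.univ) :
    2 * graphEnergy G ≤ selfLoopEnergy G S + selfLoopEnergy G Sᶜ :=
  two_energy_le_general G S
end

section
/- Let G be a simple graph containing a connected component H with at least 2 vertices, and let S be a nonempty independent set of vertices of H. Then E(G_S) > E(G) or E(G_{V(G)∖S}) > E(G). -/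
set_option linter.unusedSectionVars false

open Matrix Finset

/-!
Let `P` be the spectral projection of `A = A(G)` onto its positive eigenspace. For Hermitian `M`
and `0 ≤ Q ≤ 1`, writing `M - c = X - Y` with `X, Y ≥ 0` and `tr (X + Y) = ∑ |λᵢ(M) - c|` gives
`tr ((M - c)(2Q - 1)) = ∑ |λᵢ(M) - c| - 2 tr (X(1 - Q)) - 2 tr (YQ) ≤ ∑ |λᵢ(M) - c|`, and equality
forces `X(1 - Q) = YQ = 0`, hence `MQ = QM`. With `Q = P` the lower bounds for `E(G_S)` and
`E(G_{V∖S})` add up to `2 tr (A(2P - 1)) = 2 E(G)`, so if neither energy exceeds `E(G)` both are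
attained and `D_S` commutes with `P`. Then `tr (AP D_S) = tr (D_S A D_S P) = 0`, and
`tr (A D_S) = 0` too, because `S` is independent; as `AP` and `AP - A` are positive semidefinite,
this gives `A D_S = 0`: no vertex of `S` has a neighbour, which is impossible inside a component
with at least two vertices.
-/

namespace Matrix

section PosSemidef

variable {n : Type*} [Fintype n]

lemma PosSemidef.exists_isHermitian_mul_self_eq {X : Matrix n n ℝ} (hX : X.PosSemidef) :
    ∃ R : Matrix n n ℝ, R.IsHermitian ∧ R * R = X := by
  classical
  open scoped MatrixOrder in
  exact ⟨CFC.sqrt X, (nonneg_iff_posSemidef.mp (CFC.sqrt_nonneg X)).isHermitian,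
    CFC.sqrt_mul_sqrt_self X (nonneg_iff_posSemidef.mpr hX)⟩

lemma IsHermitian.trace_mul_self_mul_mul_self {R T : Matrix n n ℝ} (hR : R.IsHermitian)
    (hT : T.IsHermitian) : (R * R * (T * T)).trace = ((R * T)ᴴ * (R * T)).trace := by
  rw [conjTranspose_mul, hR.eq, hT.eq, Matrix.mul_assoc T, trace_mul_comm T]
  simp only [Matrix.mul_assoc]

lemma PosSemidef.trace_mul_nonneg {X Y : Matrix n n ℝ} (hX : X.PosSemidef) (hY : Y.PosSemidef) :
    0 ≤ (X * Y).trace := by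
  obtain ⟨R, hR, rfl⟩ := hX.exists_isHermitian_mul_self_eq
  obtain ⟨T, hT, rfl⟩ := hY.exists_isHermitian_mul_self_eq
  rw [hR.trace_mul_self_mul_mul_self hT]
  exact (posSemidef_conjTranspose_mul_self _).trace_nonneg

lemma PosSemidef.mul_eq_zero_of_trace_mul_eq_zero {X Y : Matrix n n ℝ} (hX : X.PosSemidef)
    (hY : Y.PosSemidef) (h : (X * Y).trace = 0) : X * Y = 0 := by
  obtain ⟨R, hR, rfl⟩ := hX.exists_isHermitian_mul_self_eq
  obtain ⟨T, hT, rfl⟩ := hY.exists_isHermitian_mul_self_eq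
  rw [hR.trace_mul_self_mul_mul_self hT, trace_conjTranspose_mul_self_eq_zero_iff] at h
  rw [Matrix.mul_assoc, ← Matrix.mul_assoc R T, h, Matrix.zero_mul, Matrix.mul_zero]

variable [DecidableEq n] {N X Y Q : Matrix n n ℝ}

lemma trace_add_sub_trace_mul_eq (hN : N = X - Y) :
    (X + Y).trace - (N * (2 • Q - 1)).trace = 2 * ((X * (1 - Q)).trace + (Y * Q).trace) := by
  have : X + Y - N * (2 • Q - 1) = 2 • (X * (1 - Q) + Y * Q) := by
    subst hN
    noncomm_ring
  rw [← trace_sub, this, trace_smul, trace_add, nsmul_eq_mul, Nat.cast_ofNat]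

lemma trace_mul_le_trace_add (hX : X.PosSemidef) (hY : Y.PosSemidef) (hN : N = X - Y)
    (hQ : Q.PosSemidef) (hQ1 : (1 - Q).PosSemidef) :
    (N * (2 • Q - 1)).trace ≤ (X + Y).trace := by
  have := trace_add_sub_trace_mul_eq (Q := Q) hN
  linarith [hX.trace_mul_nonneg hQ1, hY.trace_mul_nonneg hQ]

lemma commute_of_trace_mul_eq_trace_add (hX : X.PosSemidef) (hY : Y.PosSemidef)
    (hN : N = X - Y) (hQ : Q.PosSemidef) (hQ1 : (1 - Q).PosSemidef)
    (h : (N * (2 • Q - 1)).trace = (X + Y).trace) : Commute N Q := by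
  have hgap := trace_add_sub_trace_mul_eq (Q := Q) hN
  have hXQ1 := hX.trace_mul_nonneg hQ1
  have hYQ := hY.trace_mul_nonneg hQ
  have hX0 : X * (1 - Q) = 0 := hX.mul_eq_zero_of_trace_mul_eq_zero hQ1 (by linarith)
  have hY0 : Y * Q = 0 := hY.mul_eq_zero_of_trace_mul_eq_zero hQ (by linarith)
  have hNQ : N * Q = X := by
    rw [hN, Matrix.sub_mul, hY0, sub_zero]
    simpa [Matrix.mul_sub, sub_eq_zero, eq_comm] using hX0
  have hNh : Nᴴ = N := by rw [hN, conjTranspose_sub, hX.isHermitian.eq, hY.isHermitian.eq]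
  calc N * Q = X := hNQ
    _ = (N * Q)ᴴ := by rw [hNQ, hX.isHermitian.eq]
    _ = Q * N := by rw [conjTranspose_mul, hNh, hQ.isHermitian.eq]

end PosSemidef

namespace IsHermitian

variable {n : Type*} [Fintype n] [DecidableEq n] {A : Matrix n n ℝ} (hA : A.IsHermitian)
include hA

lemma cfc_mul (f g : ℝ → ℝ) : hA.cfc f * hA.cfc g = hA.cfc (f * g) := by
  rw [IsHermitian.cfc, IsHermitian.cfc, IsHermitian.cfc, ← map_mul, diagonal_mul_diagonal]
  rfl

lemma cfc_add (f g : ℝ → ℝ) : hA.cfc f + hA.cfc g = hA.cfc (f + g) := by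
  rw [IsHermitian.cfc, IsHermitian.cfc, IsHermitian.cfc, ← map_add, diagonal_add]
  rfl

lemma cfc_sub (f g : ℝ → ℝ) : hA.cfc f - hA.cfc g = hA.cfc (f - g) := by
  rw [IsHermitian.cfc, IsHermitian.cfc, IsHermitian.cfc, ← map_sub, diagonal_sub]
  rfl

lemma cfc_id : hA.cfc id = A := hA.spectral_theorem.symm

lemma cfc_const (r : ℝ) : hA.cfc (fun _ => r) = r • 1 := by
  rw [IsHermitian.cfc, ← map_one (Unitary.conjStarAlgAut ℝ _ hA.eigenvectorUnitary), ← map_smul]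
  congr 1
  ext i j
  simp [diagonal_apply, one_apply]

lemma trace_cfc (f : ℝ → ℝ) : (hA.cfc f).trace = ∑ i, f (hA.eigenvalues i) := by
  rw [IsHermitian.cfc, Unitary.conjStarAlgAut_apply, trace_mul_cycle,
    Unitary.star_mul_self_of_mem hA.eigenvectorUnitary.2]
  simp

lemma posSemidef_cfc {f : ℝ → ℝ} (hf : ∀ i, 0 ≤ f (hA.eigenvalues i)) :
    (hA.cfc f).PosSemidef := by
  rw [IsHermitian.cfc, Unitary.conjStarAlgAut_apply]
  exact (PosSemidef.diagonal fun i => by simpa using hf i).mul_mul_conjTranspose_same _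

lemma mul_cfc (f : ℝ → ℝ) : A * hA.cfc f = hA.cfc fun x => x * f x :=
  (congrArg (· * hA.cfc f) hA.cfc_id).symm.trans (hA.cfc_mul id f)

lemma commute_cfc (f g : ℝ → ℝ) : Commute (hA.cfc f) (hA.cfc g) := by
  rw [Commute, SemiconjBy, cfc_mul, cfc_mul, mul_comm]

noncomputable def posSpectralProj : Matrix n n ℝ := hA.cfc fun x => if 0 < x then 1 else 0

lemma posSemidef_posSpectralProj : hA.posSpectralProj.PosSemidef :=
  hA.posSemidef_cfc fun _ => by split_ifs <;> norm_num

lemma posSemidef_one_sub_posSpectralProj : (1 - hA.posSpectralProj).PosSemidef := by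
  rw [posSpectralProj, ← one_smul ℝ (1 : Matrix n n ℝ), ← hA.cfc_const, cfc_sub]
  exact hA.posSemidef_cfc fun i => by dsimp only [Pi.sub_apply]; split_ifs <;> norm_num

lemma posSemidef_mul_posSpectralProj : (A * hA.posSpectralProj).PosSemidef := by
  rw [posSpectralProj, mul_cfc]
  exact hA.posSemidef_cfc fun i => by split_ifs with h <;> nlinarith

lemma posSemidef_mul_posSpectralProj_sub : (A * hA.posSpectralProj - A).PosSemidef := by
  have : A * hA.posSpectralProj - A = hA.cfc fun x => x * (if 0 < x then 1 else 0) - x := by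
    conv_lhs => rw [posSpectralProj, mul_cfc]; enter [2]; rw [← hA.cfc_id]
    exact hA.cfc_sub _ _
  rw [this]
  exact hA.posSemidef_cfc fun i => by split_ifs with h <;> nlinarith

lemma commute_posSpectralProj : Commute A hA.posSpectralProj := by
  conv_lhs => rw [← hA.cfc_id]
  exact hA.commute_cfc _ _

lemma mul_eq_zero_of_commute_posSpectralProj {D : Matrix n n ℝ} (hD : D.PosSemidef)
    (hDD : D * D = D) (hDAD : D * A * D = 0) (hcomm : Commute D hA.posSpectralProj) :
    A * D = 0 := by
  set P := hA.posSpectralProj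
  have hpos : (A * P * D).trace = 0 :=
    calc (A * P * D).trace = (A * (D * P) * D).trace := by
          simp only [hcomm.eq, Matrix.mul_assoc, hDD]
      _ = (D * A * D * P).trace := by
          rw [trace_mul_comm, ← Matrix.mul_assoc, ← Matrix.mul_assoc, Matrix.mul_assoc D A D]
      _ = 0 := by rw [hDAD, Matrix.zero_mul, trace_zero]
  have hA0 : (A * D).trace = 0 := by
    rw [← hDD, ← Matrix.mul_assoc, trace_mul_comm, ← Matrix.mul_assoc, hDAD, trace_zero]
  have hneg : ((A * P - A) * D).trace = 0 := by rw [Matrix.sub_mul, trace_sub, hpos, hA0, sub_zero]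
  calc A * D = A * P * D - (A * P - A) * D := by rw [Matrix.sub_mul, sub_sub_cancel]
    _ = 0 := by
      rw [hA.posSemidef_mul_posSpectralProj.mul_eq_zero_of_trace_mul_eq_zero hD hpos,
        hA.posSemidef_mul_posSpectralProj_sub.mul_eq_zero_of_trace_mul_eq_zero hD hneg, sub_zero]

end IsHermitian

end Matrix

section Energy

variable {n : Type} [Fintype n] [DecidableEq n] {M Q : Matrix n n ℝ}

lemma exists_posSemidef_sub_eq_and_trace_add_eq_energyOf (hM : M.IsHermitian) (c : ℝ) :
    ∃ X Y : Matrix n n ℝ, X.PosSemidef ∧ Y.PosSemidef ∧ M - c • 1 = X - Y ∧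
      (X + Y).trace = energyOf M hM c := by
  refine ⟨hM.cfc fun x => (x - c)⁺, hM.cfc fun x => (x - c)⁻,
    hM.posSemidef_cfc fun _ => posPart_nonneg _, hM.posSemidef_cfc fun _ => negPart_nonneg _,
    ?_, ?_⟩
  · conv_lhs => rw [← hM.cfc_id, ← hM.cfc_const, hM.cfc_sub]
    rw [hM.cfc_sub]
    congr 1
    funext x
    exact (posPart_sub_negPart (x - c)).symm
  · rw [trace_add, hM.trace_cfc, hM.trace_cfc, ← sum_add_distrib, energyOf]
    exact sum_congr rfl fun i _ => posPart_add_negPart _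

lemma trace_mul_le_energyOf (hM : M.IsHermitian) (c : ℝ) (hQ : Q.PosSemidef)
    (hQ1 : (1 - Q).PosSemidef) : ((M - c • 1) * (2 • Q - 1)).trace ≤ energyOf M hM c := by
  obtain ⟨X, Y, hX, hY, hN, hE⟩ := exists_posSemidef_sub_eq_and_trace_add_eq_energyOf hM c
  exact hE ▸ trace_mul_le_trace_add hX hY hN hQ hQ1

lemma commute_of_trace_mul_eq_energyOf (hM : M.IsHermitian) (c : ℝ) (hQ : Q.PosSemidef)
    (hQ1 : (1 - Q).PosSemidef) (h : ((M - c • 1) * (2 • Q - 1)).trace = energyOf M hM c) :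
    Commute M Q := by
  obtain ⟨X, Y, hX, hY, hN, hE⟩ := exists_posSemidef_sub_eq_and_trace_add_eq_energyOf hM c
  have := commute_of_trace_mul_eq_trace_add hX hY hN hQ hQ1 (h.trans hE.symm)
  simpa using this.add_left ((Commute.one_left Q).smul_left c)

lemma trace_mul_two_nsmul_posSpectralProj_sub_one (hM : M.IsHermitian) :
    (M * (2 • hM.posSpectralProj - 1)).trace = energyOf M hM 0 := by
  rw [IsHermitian.posSpectralProj, two_nsmul, hM.cfc_add, ← one_smul ℝ (1 : Matrix n n ℝ),
    ← hM.cfc_const, hM.cfc_sub, hM.mul_cfc, hM.trace_cfc, energyOf]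
  refine sum_congr rfl fun i _ => ?_
  dsimp only [Pi.sub_apply, Pi.add_apply, Pi.mul_apply, id]
  rw [sub_zero]
  split_ifs with h
  · rw [abs_of_pos h]; ring
  · rw [abs_of_nonpos (not_lt.mp h)]; ring

end Energy

section LoopDiag

variable {V : Type} [Fintype V] [DecidableEq V] (S : Finset V)

lemma posSemidef_loopDiag : (loopDiag S).PosSemidef :=
  PosSemidef.diagonal fun v => by dsimp only; split_ifs <;> norm_num

lemma loopDiag_mul_self : loopDiag S * loopDiag S = loopDiag S := by
  rw [loopDiag, diagonal_mul_diagonal]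
  congr 1
  funext v
  split_ifs <;> norm_num

lemma loopDiag_add_loopDiag_compl_s6 : loopDiag S + loopDiag Sᶜ = 1 := by
  rw [loopDiag, loopDiag, diagonal_add, ← diagonal_one]
  congr 1
  funext v
  by_cases hv : v ∈ S <;> simp [hv]

lemma loopDiag_mul_mul_loopDiag_eq_zero {A : Matrix V V ℝ} (hS : ∀ u ∈ S, ∀ v ∈ S, A u v = 0) :
    loopDiag S * A * loopDiag S = 0 := by
  ext u v
  simp only [loopDiag, mul_diagonal, diagonal_mul, Matrix.zero_apply]
  split_ifs with hu hv
  · simp [hS u hu v hv]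
  all_goals simp

lemma trace_shift_mul_add_trace_shift_compl_mul [Nonempty V] (M Q : Matrix V V ℝ) :
    ((M + loopDiag S - ((S.card : ℝ) / Fintype.card V) • 1) * Q).trace
      + ((M + loopDiag Sᶜ - ((Sᶜ.card : ℝ) / Fintype.card V) • 1) * Q).trace
      = 2 * (M * Q).trace := by
  have hcard : (S.card : ℝ) / Fintype.card V + (Sᶜ.card : ℝ) / Fintype.card V = 1 := by
    rw [← add_div, div_eq_one_iff_eq (by positivity), ← Nat.cast_add, card_add_card_compl]
  have hsum : M + loopDiag S - ((S.card : ℝ) / Fintype.card V) • 1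
      + (M + loopDiag Sᶜ - ((Sᶜ.card : ℝ) / Fintype.card V) • 1)
      = 2 • M + (loopDiag S + loopDiag Sᶜ)
        - ((S.card : ℝ) / Fintype.card V + (Sᶜ.card : ℝ) / Fintype.card V) • 1 := by
    rw [add_smul, two_nsmul]
    abel
  rw [← trace_add, ← Matrix.add_mul, hsum, hcard, loopDiag_add_loopDiag_compl_s6, one_smul,
    add_sub_cancel_right, smul_mul, trace_smul, nsmul_eq_mul, Nat.cast_ofNat]

end LoopDiag

lemma SimpleGraph.ConnectedComponent.exists_adj_of_one_lt_ncard {V : Type*} {G : SimpleGraph V}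
    {C : G.ConnectedComponent} (hC : 1 < C.supp.ncard) {v : V} (hv : v ∈ C.supp) :
    ∃ w, G.Adj v w := by
  obtain ⟨u, hu, huv⟩ := C.supp.exists_ne_of_one_lt_ncard hC v
  obtain ⟨p⟩ : G.Reachable v u := ConnectedComponent.exact (hv.trans hu.symm)
  exact ⟨_, p.adj_snd (p.not_nil_of_ne huv.symm)⟩

/-- If `S` is a nonempty independent set inside a connected component with at
least two vertices, then `E(G_S) > E(G)` or `E(G_{V∖S}) > E(G)`. -/
theorem energy_gt_of_indep {V : Type} [Fintype V] [DecidableEq V]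
    (G : SimpleGraph V) [DecidableRel G.Adj] (c : G.ConnectedComponent)
    (hc : 2 ≤ c.supp.ncard) (S : Finset V) (hne : S.Nonempty)
    (hsub : ↑S ⊆ c.supp)
    (hindep : ∀ u ∈ S, ∀ v ∈ S, ¬ G.Adj u v) :
    graphEnergy G < selfLoopEnergy G S ∨ graphEnergy G < selfLoopEnergy G Sᶜ := by
  obtain ⟨s, hs⟩ := hne
  obtain ⟨w, hsw⟩ := c.exists_adj_of_one_lt_ncard hc (hsub hs)
  have : Nonempty V := ⟨s⟩
  have hA := adjMatrix_isHermitian G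
  have hP := hA.posSemidef_posSpectralProj
  have hP1 := hA.posSemidef_one_sub_posSpectralProj
  have hS : _ ≤ selfLoopEnergy G S := trace_mul_le_energyOf _ _ hP hP1
  have hSc : _ ≤ selfLoopEnergy G Sᶜ := trace_mul_le_energyOf _ _ hP hP1
  have hsum := trace_shift_mul_add_trace_shift_compl_mul S (G.adjMatrix ℝ)
    (2 • hA.posSpectralProj - 1)
  rw [trace_mul_two_nsmul_posSpectralProj_sub_one] at hsum
  change _ = 2 * graphEnergy G at hsum
  by_contra! ⟨hS_le, hSc_le⟩
  have hS_eq : _ = selfLoopEnergy G S := le_antisymm hS (by linarith)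
  have hcomm : Commute (G.adjMatrix ℝ + loopDiag S) hA.posSpectralProj :=
    commute_of_trace_mul_eq_energyOf (selfLoop_isHermitian G S) _ hP hP1 hS_eq
  have hAD : G.adjMatrix ℝ * loopDiag S = 0 :=
    hA.mul_eq_zero_of_commute_posSpectralProj (posSemidef_loopDiag S) (loopDiag_mul_self S)
      (loopDiag_mul_mul_loopDiag_eq_zero S fun u hu v hv => by simp [hindep u hu v hv])
      (by simpa using hcomm.sub_left hA.commute_posSpectralProj)
  have := congrFun₂ hAD w s
  simp [loopDiag, hs, hsw.symm] at this
end
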